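/- arXiv:1108.5037 — 6 statements merged into one kernel-verified Lean document; each statement's English description precedes it below -/
import Mathlib

section
/- For fixed y and μ, the alternating minimization iteration x^{j+1} = S_{1/μ}(Φ'(p^j + y/μ)), p^{j+1} = [b; Γ̄(Φx^{j+1} − y/μ)] produces a monotonically nonincreasing sequence L(x^j, p^j) of augmented Lagrangian values, with strict decrease unless (x^{j+1}, p^{j+1}) = (x^j, p^j). -/
open Matrix

noncomputable def softThresh (l w : ℝ) : ℝ := Real.sign w * max (|w| - l) 0

noncomputable def softThreshV {ι : Type*} (l : ℝ) (w : ι → ℝ) : ι → ℝ :=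
  fun i => softThresh l (w i)

noncomputable def l1norm {ι : Type*} [Fintype ι] (x : ι → ℝ) : ℝ := ∑ i, |x i|

noncomputable def l2norm {ι : Type*} [Fintype ι] (x : ι → ℝ) : ℝ :=
  Real.sqrt (∑ i, (x i)^2)

noncomputable def ip {ι : Type*} [Fintype ι] (u v : ι → ℝ) : ℝ := ∑ i, u i * v i

noncomputable def lag {ι : Type*} [Fintype ι] (Φ : Matrix ι ι ℝ) (y : ι → ℝ) (μ : ℝ)
    (x p : ι → ℝ) : ℝ :=
  l1norm x + ip (p - Φ.mulVec x) y + (μ/2) * (l2norm (p - Φ.mulVec x))^2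

lemma soft_min {μ : ℝ} (hμ : 0 < μ) (w t : ℝ) :
    |softThresh μ⁻¹ w| + μ/2 * (w - softThresh μ⁻¹ w)^2 + μ/2 * (t - softThresh μ⁻¹ w)^2
      ≤ |t| + μ/2 * (w - t)^2 := by
  have hμ' : μ * μ⁻¹ = 1 := mul_inv_cancel₀ hμ.ne'
  have hinv : 0 < μ⁻¹ := inv_pos.mpr hμ
  unfold softThresh
  rcases le_or_gt |w| μ⁻¹ with h | h
  · rw [max_eq_right (by linarith)]
    rw [mul_zero, abs_zero]
    have h1 := (abs_le.mp h).1
    have h2 := (abs_le.mp h).2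
    have key : μ * w * t ≤ |t| := by
      rcases le_total 0 t with ht | ht
      · have : μ * w * t ≤ μ * μ⁻¹ * t := by nlinarith [mul_nonneg hμ.le ht]
        rw [hμ', one_mul] at this
        exact this.trans (le_abs_self t)
      · have : μ * w * t ≤ μ * μ⁻¹ * (-t) := by nlinarith [mul_nonneg hμ.le (neg_nonneg.mpr ht)]
        rw [hμ', one_mul] at this
        exact this.trans (neg_le_abs t)
    nlinarith [key]
  · rcases lt_trichotomy w 0 with hw | hw | hw
    · have hw' : μ⁻¹ < -w := by rw [abs_of_neg hw] at h; exact h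
      rw [Real.sign_of_neg hw, abs_of_neg hw, max_eq_left (by linarith)]
      have hs : (-1 : ℝ) * (-w - μ⁻¹) = w + μ⁻¹ := by ring
      rw [hs]
      have hsneg : w + μ⁻¹ < 0 := by linarith
      rw [abs_of_neg hsneg]
      have key : |t| + μ/2 * (w - t)^2 -
          (-(w + μ⁻¹) + μ/2 * (w - (w + μ⁻¹))^2 + μ/2 * (t - (w + μ⁻¹))^2) = |t| + t := by
        field_simp
        ring
      linarith [neg_abs_le t]
    · exfalso; rw [hw, abs_zero] at h; linarith
    · have hw' : μ⁻¹ < w := by rw [abs_of_pos hw] at h; exact h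
      rw [Real.sign_of_pos hw, abs_of_pos hw, max_eq_left (by linarith)]
      have hs : (1 : ℝ) * (w - μ⁻¹) = w - μ⁻¹ := by ring
      rw [hs]
      have hspos : 0 < w - μ⁻¹ := by linarith
      rw [abs_of_pos hspos]
      have key : |t| + μ/2 * (w - t)^2 -
          ((w - μ⁻¹) + μ/2 * (w - (w - μ⁻¹))^2 + μ/2 * (t - (w - μ⁻¹))^2) = |t| - t := by
        field_simp
        ring
      linarith [le_abs_self t]

lemma lag_eq {ι : Type*} [Fintype ι] (Φ : Matrix ι ι ℝ) (y : ι → ℝ) {μ : ℝ} (hμ : 0 < μ)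
    (x p : ι → ℝ) :
    lag Φ y μ x p = l1norm x + μ/2 * (∑ i, ((p i + μ⁻¹ * y i) - Φ.mulVec x i)^2)
      - (2*μ)⁻¹ * ∑ i, (y i)^2 := by
  unfold lag l1norm ip l2norm
  rw [Real.sq_sqrt (by positivity), Finset.mul_sum, Finset.mul_sum, Finset.mul_sum]
  have : ∀ i : ι, (p - Φ.mulVec x) i * y i + μ/2 * ((p - Φ.mulVec x) i)^2 =
      μ/2 * ((p i + μ⁻¹ * y i) - Φ.mulVec x i)^2 - (2*μ)⁻¹ * (y i)^2 := by
    intro i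
    simp only [Pi.sub_apply]
    field_simp
    ring
  rw [add_assoc, ← Finset.sum_add_distrib]
  rw [Finset.sum_congr rfl (fun i _ => this i), Finset.sum_sub_distrib]
  ring

lemma key_iso {ι : Type*} [Fintype ι] [DecidableEq ι] {Φ : Matrix ι ι ℝ} (hΦ : Φᵀ * Φ = 1)
    (u z : ι → ℝ) :
    ∑ i, (u i - Φ.mulVec z i)^2 = ∑ i, (Φᵀ.mulVec u i - z i)^2 := by
  have h : (fun i => u i - Φ.mulVec z i) = Φ.mulVec (Φᵀ.mulVec u - z) := by
    rw [Matrix.mulVec_sub, Matrix.mulVec_mulVec, mul_eq_one_comm.mp hΦ,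
      Matrix.one_mulVec]
    rfl
  have hsum : ∑ i, (u i - Φ.mulVec z i)^2 = ∑ i, (Φ.mulVec (Φᵀ.mulVec u - z) i)^2 := by
    apply Finset.sum_congr rfl
    intro i _
    rw [show u i - Φ.mulVec z i = Φ.mulVec (Φᵀ.mulVec u - z) i from congrFun h i]
  rw [hsum]
  have hdp : Φ.mulVec (Φᵀ.mulVec u - z) ⬝ᵥ Φ.mulVec (Φᵀ.mulVec u - z) =
      (Φᵀ.mulVec u - z) ⬝ᵥ (Φᵀ.mulVec u - z) := by
    rw [Matrix.dotProduct_mulVec, Matrix.vecMul_mulVec, hΦ, Matrix.vecMul_one]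
  simpa [dotProduct, sq] using hdp

/-- The alternating minimization iteration produces a nonincreasing sequence of augmented
Lagrangian values, strictly decreasing unless the iterates repeat. -/
theorem alternating_lag_monotone {n m : ℕ} (Φ : Matrix (Fin n ⊕ Fin m) (Fin n ⊕ Fin m) ℝ)
    (hΦ : Φᵀ * Φ = 1) (b : Fin n → ℝ) (y : (Fin n ⊕ Fin m) → ℝ) (μ : ℝ) (hμ : 0 < μ)
    (x p : ℕ → (Fin n ⊕ Fin m) → ℝ)
    (hx : ∀ j, x (j+1) = softThreshV μ⁻¹ (Φᵀ.mulVec (p j + μ⁻¹ • y)))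
    (hp : ∀ j, p (j+1) = Sum.elim b (fun i => (Φ.mulVec (x (j+1)) - μ⁻¹ • y) (Sum.inr i)))
    (hp0 : ∀ i, p 0 (Sum.inl i) = b i) :
    ∀ j, lag Φ y μ (x (j+1)) (p (j+1)) ≤ lag Φ y μ (x j) (p j) ∧
      (lag Φ y μ (x (j+1)) (p (j+1)) = lag Φ y μ (x j) (p j) →
        x (j+1) = x j ∧ p (j+1) = p j) := by
  have hpc : ∀ k i, p k (Sum.inl i) = b i := by
    intro k
    induction k with
    | zero => exact hp0
    | succ k ih => intro i; rw [hp k]; simp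
  intro j
  set S1 := ∑ i, (x j i - x (j+1) i)^2 with hS1def
  set S2 := ∑ i, (p j i - p (j+1) i)^2 with hS2def
  have hS1 : 0 ≤ S1 := Finset.sum_nonneg (fun i _ => sq_nonneg _)
  have hS2 : 0 ≤ S2 := Finset.sum_nonneg (fun i _ => sq_nonneg _)
  have hiso : ∀ z : (Fin n ⊕ Fin m) → ℝ,
      ∑ i, ((p j i + μ⁻¹ * y i) - Φ.mulVec z i)^2
        = ∑ i, (Φᵀ.mulVec (p j + μ⁻¹ • y) i - z i)^2 := by
    intro z
    have := key_iso hΦ (p j + μ⁻¹ • y) z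
    simpa using this
  have step1 : lag Φ y μ (x (j+1)) (p j) + μ/2 * S1 ≤ lag Φ y μ (x j) (p j) := by
    rw [lag_eq Φ y hμ, lag_eq Φ y hμ, hiso, hiso]
    have hterm : ∀ i, |x (j+1) i| + μ/2 * (Φᵀ.mulVec (p j + μ⁻¹ • y) i - x (j+1) i)^2
        + μ/2 * (x j i - x (j+1) i)^2
        ≤ |x j i| + μ/2 * (Φᵀ.mulVec (p j + μ⁻¹ • y) i - x j i)^2 := by
      intro i
      rw [hx j]
      exact soft_min hμ (Φᵀ.mulVec (p j + μ⁻¹ • y) i) (x j i)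
    have hsum := Finset.sum_le_sum (fun i (_ : i ∈ Finset.univ) => hterm i)
    simp only [Finset.sum_add_distrib] at hsum
    unfold l1norm
    simp only [← Finset.mul_sum] at hsum
    linarith [hsum]
  have step2 : lag Φ y μ (x (j+1)) (p (j+1)) + μ/2 * S2 = lag Φ y μ (x (j+1)) (p j) := by
    rw [lag_eq Φ y hμ, lag_eq Φ y hμ]
    have hsum : ∑ i, ((p (j+1) i + μ⁻¹ * y i) - Φ.mulVec (x (j+1)) i)^2
        + ∑ i, (p j i - p (j+1) i)^2
        = ∑ i, ((p j i + μ⁻¹ * y i) - Φ.mulVec (x (j+1)) i)^2 := by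
      rw [← Finset.sum_add_distrib]
      apply Finset.sum_congr rfl
      intro i _
      rcases i with i | i
      · rw [hpc (j+1) i, hpc j i]; ring
      · have h1 : p (j+1) (Sum.inr i) = Φ.mulVec (x (j+1)) (Sum.inr i) - μ⁻¹ * y (Sum.inr i) := by
          rw [hp j]; simp
        rw [h1]; ring
    rw [hS2def]
    linear_combination (μ/2) * hsum
  constructor
  · nlinarith [mul_nonneg (by linarith : (0:ℝ) ≤ μ/2) hS1, mul_nonneg (by linarith : (0:ℝ) ≤ μ/2) hS2]
  · intro heq
    have hz : μ/2 * S1 + μ/2 * S2 ≤ 0 := by linarith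
    have h1 : S1 = 0 := by nlinarith
    have h2 : S2 = 0 := by nlinarith
    constructor
    · funext i
      have := (Finset.sum_eq_zero_iff_of_nonneg
        (fun i (_ : i ∈ Finset.univ) => sq_nonneg (x j i - x (j+1) i))).mp h1 i (Finset.mem_univ i)
      have := sub_eq_zero.mp (pow_eq_zero_iff (two_ne_zero)|>.mp this)
      linarith [this]
    · funext i
      have := (Finset.sum_eq_zero_iff_of_nonneg
        (fun i (_ : i ∈ Finset.univ) => sq_nonneg (p j i - p (j+1) i))).mp h2 i (Finset.mem_univ i)
      have := sub_eq_zero.mp (pow_eq_zero_iff (two_ne_zero)|>.mp this)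
      linarith [this]
end

section
/- If a fixed point x_s* of the alternating iteration satisfies x_s* = S_{1/μ}(x_s* + A'(b + Γ(y)/μ − A x_s*)), then x_s* is a minimizer of x ↦ ‖x‖₁ + (μ/2)‖Ax − b − Γ(y)/μ‖₂² over ℝ^N. -/
/-!
The fixed-point equation says, coordinatewise, that `μ Aᵀ(c - A xₛ)` is a subgradient of `‖·‖₁`
at `xₛ`, where `c = b + Γ(y)/μ`: soft thresholding at level `l` is the proximal map of `l |·|`.
This is exactly the first-order optimality condition of the convex objective
`‖x‖₁ + (μ/2)‖Ax - c‖₂²`, so the subgradient inequality for `‖·‖₁` plus the convexity of the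
quadratic term, `‖r + v‖² ≥ ‖r‖² + 2⟪r, v⟫` with `r = A xₛ - c` and `v = A (x - xₛ)`,
give the claim.
-/

open Matrix

lemma softThresh_subgradient {l : ℝ} (hl : 0 ≤ l) (w t : ℝ) :
    l * |softThresh l w| + (w - softThresh l w) * (t - softThresh l w) ≤ l * |t| := by
  unfold softThresh
  by_cases hpos : l < w
  · have hw : 0 < w := hl.trans_lt hpos
    rw [Real.sign_of_pos hw, abs_of_pos hw, max_eq_left (by linarith), one_mul,
      abs_of_nonneg (by linarith)]
    nlinarith [le_abs_self t]
  by_cases hneg : w < -l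
  · have hw : w < 0 := by linarith
    rw [Real.sign_of_neg hw, abs_of_neg hw, max_eq_left (by linarith),
      abs_of_nonpos (by linarith)]
    nlinarith [neg_abs_le t]
  · have hw : |w| ≤ l := abs_le.2 ⟨by linarith, by linarith⟩
    rw [max_eq_right (by linarith), mul_zero, abs_zero, mul_zero, zero_add, sub_zero, sub_zero]
    calc w * t ≤ |w| * |t| := by rw [← abs_mul]; exact le_abs_self _
      _ ≤ l * |t| := by gcongr

lemma l1norm_softThreshV_add_dotProduct_le {ι : Type*} [Fintype ι] {l : ℝ} (hl : 0 ≤ l)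
    (w x : ι → ℝ) :
    l * l1norm (softThreshV l w) + (w - softThreshV l w) ⬝ᵥ (x - softThreshV l w)
      ≤ l * l1norm x := by
  simp only [l1norm, dotProduct, Finset.mul_sum, ← Finset.sum_add_distrib, Pi.sub_apply]
  exact Finset.sum_le_sum fun i _ => softThresh_subgradient hl (w i) (x i)

lemma l2norm_sq {ι : Type*} [Fintype ι] (u : ι → ℝ) : l2norm u ^ 2 = u ⬝ᵥ u := by
  rw [l2norm, Real.sq_sqrt (Finset.sum_nonneg fun i _ => sq_nonneg (u i))]
  simp only [dotProduct, sq]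

lemma l2norm_add_sq {ι : Type*} [Fintype ι] (u v : ι → ℝ) :
    l2norm (u + v) ^ 2 = l2norm u ^ 2 + 2 * (u ⬝ᵥ v) + l2norm v ^ 2 := by
  simp only [l2norm_sq, add_dotProduct, dotProduct_add, dotProduct_comm v u]
  ring

theorem l1norm_add_l2norm_sq_le_of_eq_softThreshV {ι κ : Type*} [Fintype ι] [Fintype κ]
    (A : Matrix κ ι ℝ) (c : κ → ℝ) {μ : ℝ} (hμ : 0 < μ) {xs : ι → ℝ}
    (hfix : xs = softThreshV μ⁻¹ (xs + Aᵀ *ᵥ (c - A *ᵥ xs))) (x : ι → ℝ) :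
    l1norm xs + μ / 2 * l2norm (A *ᵥ xs - c) ^ 2 ≤ l1norm x + μ / 2 * l2norm (A *ᵥ x - c) ^ 2 := by
  set r := A *ᵥ xs - c
  set v := A *ᵥ (x - xs)
  have hsub := l1norm_softThreshV_add_dotProduct_le (inv_nonneg.2 hμ.le)
    (xs + Aᵀ *ᵥ (c - A *ᵥ xs)) x
  have hstep : (xs + Aᵀ *ᵥ (c - A *ᵥ xs) - xs) ⬝ᵥ (x - xs) = -(r ⬝ᵥ v) := by
    rw [add_sub_cancel_left, mulVec_transpose, ← dotProduct_mulVec, ← neg_sub, neg_dotProduct]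
  rw [← hfix, hstep] at hsub
  have hl1 : l1norm xs - μ * (r ⬝ᵥ v) ≤ l1norm x := by
    have := mul_le_mul_of_nonneg_left hsub hμ.le
    rw [mul_add, ← mul_assoc, ← mul_assoc, mul_inv_cancel₀ hμ.ne'] at this
    linarith
  have hquad : l2norm (A *ᵥ x - c) ^ 2 = l2norm r ^ 2 + 2 * (r ⬝ᵥ v) + l2norm v ^ 2 := by
    rw [← l2norm_add_sq]
    congr 1
    simp only [r, v, mulVec_sub]
    abel_nf
  rw [hquad]
  nlinarith [sq_nonneg (l2norm v)]

theorem fixed_point_minimizes_general {n m : ℕ} (A : Matrix (Fin n) (Fin n ⊕ Fin m) ℝ)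
    (b : Fin n → ℝ) (y : (Fin n ⊕ Fin m) → ℝ) (μ : ℝ) (hμ : 0 < μ)
    (xs : (Fin n ⊕ Fin m) → ℝ)
    (hfix : xs = softThreshV μ⁻¹
      (xs + Aᵀ.mulVec (b + μ⁻¹ • (fun i => y (Sum.inl i)) - A.mulVec xs))) :
    ∀ x : (Fin n ⊕ Fin m) → ℝ,
      l1norm xs + (μ/2) * (l2norm (A.mulVec xs - b - μ⁻¹ • (fun i => y (Sum.inl i))))^2
        ≤ l1norm x + (μ/2) * (l2norm (A.mulVec x - b - μ⁻¹ • (fun i => y (Sum.inl i))))^2 := by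
  intro x
  simp only [sub_sub]
  exact l1norm_add_l2norm_sq_le_of_eq_softThreshV A _ hμ hfix x

/-- A fixed point of the soft-thresholding iteration minimizes the `ℓ₁`-regularized
least squares objective `x ↦ ‖x‖₁ + (μ/2)‖Ax - b - Γ(y)/μ‖₂²`. -/
theorem fixed_point_minimizes {n m : ℕ} (A : Matrix (Fin n) (Fin n ⊕ Fin m) ℝ)
    (hA : A * Aᵀ = 1) (b : Fin n → ℝ) (y : (Fin n ⊕ Fin m) → ℝ) (μ : ℝ) (hμ : 0 < μ)
    (xs : (Fin n ⊕ Fin m) → ℝ)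
    (hfix : xs = softThreshV μ⁻¹
      (xs + Aᵀ.mulVec (b + μ⁻¹ • (fun i => y (Sum.inl i)) - A.mulVec xs))) :
    ∀ x : (Fin n ⊕ Fin m) → ℝ,
      l1norm xs + (μ/2) * (l2norm (A.mulVec xs - b - μ⁻¹ • (fun i => y (Sum.inl i))))^2
        ≤ l1norm x + (μ/2) * (l2norm (A.mulVec x - b - μ⁻¹ • (fun i => y (Sum.inl i))))^2 :=
  fixed_point_minimizes_general A b y μ hμ xs hfix
end

section
/- In Algorithm 1, with x† the optimal value of min ‖x‖₁ subject to Ax = b, the iterates satisfy ‖x_{t+1}*‖₁ ≤ x† + (1/(2μ_t))(‖y_t*‖₂² − ‖y_{t+1}*‖₂²); hence, if {y_t*} is bounded, ‖x_{t+1}*‖₁ ≤ x† + O(1/μ_t). -/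
open Matrix

lemma sq_l2norm {ι : Type*} [Fintype ι] (x : ι → ℝ) : (l2norm x)^2 = ∑ i, (x i)^2 := by
  rw [l2norm, Real.sq_sqrt]
  positivity

/-- In Algorithm 1, with `x†` the optimal value of `min ‖x‖₁ s.t. Ax = b`, one has
`‖x_{t+1}*‖₁ ≤ x† + (1/(2μ_t))(‖y_t*‖₂² - ‖y_{t+1}*‖₂²)`; hence if `{y_t*}` is bounded,
`‖x_{t+1}*‖₁ ≤ x† + O(1/μ_t)`. -/
theorem alg1_l1_upper_bound {n m : ℕ}
    (Φ : Matrix (Fin n ⊕ Fin m) (Fin n ⊕ Fin m) ℝ) (hΦ : Φᵀ * Φ = 1)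
    (A : Matrix (Fin n) (Fin n ⊕ Fin m) ℝ) (hA : A = Φ.submatrix Sum.inl id)
    (b : Fin n → ℝ) (μ : ℕ → ℝ) (hμ : ∀ t, 0 < μ t)
    (xs ps ys : ℕ → (Fin n ⊕ Fin m) → ℝ)
    (hfeas : ∀ t i, ps (t+1) (Sum.inl i) = b i)
    (hmin : ∀ t (x p : (Fin n ⊕ Fin m) → ℝ), (∀ i, p (Sum.inl i) = b i) →
      lag Φ (ys t) (μ t) (xs (t+1)) (ps (t+1)) ≤ lag Φ (ys t) (μ t) x p)
    (hy : ∀ t, ys (t+1) = ys t + μ t • (ps (t+1) - Φ.mulVec (xs (t+1))))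
    (xdag : ℝ)
    (hdag : IsLeast {r : ℝ | ∃ x, A.mulVec x = b ∧ l1norm x = r} xdag) :
    (∀ t, l1norm (xs (t+1)) ≤
        xdag + (1/(2 * μ t)) * ((l2norm (ys t))^2 - (l2norm (ys (t+1)))^2)) ∧
    ((∃ M : ℝ, ∀ t, l2norm (ys t) ≤ M) →
      ∃ C : ℝ, ∀ t, l1norm (xs (t+1)) ≤ xdag + C / μ t) := by
  obtain ⟨⟨xo, hxo, hxol1⟩, -⟩ := hdag
  have key : ∀ t, l1norm (xs (t+1)) ≤
      xdag + (1/(2 * μ t)) * ((l2norm (ys t))^2 - (l2norm (ys (t+1)))^2) := by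
    intro t
    have hfeaso : ∀ i, (Φ.mulVec xo) (Sum.inl i) = b i := by
      intro i
      have := congrFun hxo i
      simpa [hA, Matrix.mulVec, Matrix.submatrix, dotProduct] using this
    have hle := hmin t xo (Φ.mulVec xo) hfeaso
    have hlagxo : lag Φ (ys t) (μ t) xo (Φ.mulVec xo) = xdag := by
      simp [lag, ip, l2norm, hxol1]
    rw [hlagxo] at hle
    set r : (Fin n ⊕ Fin m) → ℝ := ps (t+1) - Φ.mulVec (xs (t+1)) with hr
    have hexp : (l2norm (ys (t+1)))^2 =
        (l2norm (ys t))^2 + 2 * μ t * ip r (ys t) + (μ t)^2 * (l2norm r)^2 := by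
      rw [sq_l2norm, sq_l2norm, sq_l2norm, hy t, ip, Finset.mul_sum, Finset.mul_sum,
        ← Finset.sum_add_distrib, ← Finset.sum_add_distrib]
      apply Finset.sum_congr rfl
      intro i _
      simp only [Pi.add_apply, Pi.smul_apply, smul_eq_mul]
      ring
    have hlag : lag Φ (ys t) (μ t) (xs (t+1)) (ps (t+1)) =
        l1norm (xs (t+1)) + ip r (ys t) + (μ t / 2) * (l2norm r)^2 := rfl
    rw [hlag] at hle
    have hμt := hμ t
    have h2 : (1/(2 * μ t)) * ((l2norm (ys t))^2 - (l2norm (ys (t+1)))^2)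
        = -(ip r (ys t) + (μ t / 2) * (l2norm r)^2) := by
      rw [hexp]; field_simp; ring
    linarith [h2.ge, h2.le]
  refine ⟨key, ?_⟩
  rintro ⟨M, hM⟩
  refine ⟨M^2/2, fun t => ?_⟩
  have h1 := key t
  have hμt := hμ t
  have hM2 : (l2norm (ys t))^2 ≤ M^2 := by
    have h0 : (0:ℝ) ≤ l2norm (ys t) := Real.sqrt_nonneg _
    nlinarith [hM t]
  have h3 : (0:ℝ) ≤ (l2norm (ys (t+1)))^2 := sq_nonneg _
  have h5 := mul_le_mul_of_nonneg_left
    (show (l2norm (ys t))^2 - (l2norm (ys (t+1)))^2 ≤ M^2 by linarith)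
    (show (0:ℝ) ≤ 1/(2 * μ t) by positivity)
  have h6 : (1/(2 * μ t)) * M^2 = M^2/2 / μ t := by field_simp
  linarith
end

section
/- In Algorithm 2 (relaxed ONE-L1), the multiplier sequences {ŷ_t} and {y_t} are bounded, where ŷ_{t+1} = y_t + μ_t(p_t − Φx_{t+1}); specifically ‖Φ'ŷ_{t+1}‖_∞ ≤ 1, Γ(y_{t+1}) = Γ(ŷ_{t+1}), Γ̄(y_{t+1}) = 0, and ‖y_{t+1}‖₂ ≤ ‖ŷ_{t+1}‖₂. -/
open Matrix

lemma softThresh_dist (l w : ℝ) (hl : 0 ≤ l) : |w - softThresh l w| ≤ l := by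
  unfold softThresh
  rcases lt_trichotomy w 0 with h|h|h
  · rw [Real.sign_of_neg h, abs_of_neg h]
    rcases le_or_gt (-w - l) 0 with h2|h2
    · rw [max_eq_right h2, abs_le]; constructor <;> nlinarith
    · rw [max_eq_left h2.le, abs_le]; constructor <;> nlinarith
  · subst h; simp [hl]
  · rw [Real.sign_of_pos h, abs_of_pos h]
    rcases le_or_gt (w - l) 0 with h2|h2
    · rw [max_eq_right h2, abs_le]; constructor <;> nlinarith
    · rw [max_eq_left h2.le, abs_le]; constructor <;> nlinarith

/-- In Algorithm 2, the multiplier sequences `{ŷ_t}` and `{y_t}` are bounded;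
specifically `‖Φᵀŷ_{t+1}‖_∞ ≤ 1`, `Γ(y_{t+1}) = Γ(ŷ_{t+1})`, `Γ̄(y_{t+1}) = 0` and
`‖y_{t+1}‖₂ ≤ ‖ŷ_{t+1}‖₂`. -/
theorem alg2_multipliers_bounded {n m : ℕ}
    (Φ : Matrix (Fin n ⊕ Fin m) (Fin n ⊕ Fin m) ℝ) (hΦ : Φᵀ * Φ = 1)
    (b : Fin n → ℝ) (μ : ℕ → ℝ) (hμ : ∀ t, 0 < μ t)
    (xs ps ys yhat : ℕ → (Fin n ⊕ Fin m) → ℝ)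
    (hx0 : xs 0 = 0) (hp0 : ps 0 = Sum.elim b 0) (hy0 : ys 0 = 0) (hyhat0 : yhat 0 = 0)
    (hx : ∀ t, xs (t+1) = softThreshV (μ t)⁻¹ (Φᵀ.mulVec (ps t + (μ t)⁻¹ • ys t)))
    (hp : ∀ t, ps (t+1) =
      Sum.elim b (fun j => (Φ.mulVec (xs (t+1)) - (μ t)⁻¹ • ys t) (Sum.inr j)))
    (hy : ∀ t, ys (t+1) = ys t + μ t • (ps (t+1) - Φ.mulVec (xs (t+1))))
    (hyhat : ∀ t, yhat (t+1) = ys t + μ t • (ps t - Φ.mulVec (xs (t+1)))) :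
    (∀ t, (∀ i, |Φᵀ.mulVec (yhat (t+1)) i| ≤ 1) ∧
      (∀ i, ys (t+1) (Sum.inl i) = yhat (t+1) (Sum.inl i)) ∧
      (∀ j, ys (t+1) (Sum.inr j) = 0) ∧
      l2norm (ys (t+1)) ≤ l2norm (yhat (t+1))) ∧
    ∃ M : ℝ, ∀ t, l2norm (ys t) ≤ M ∧ l2norm (yhat t) ≤ M := by
  have hΦΦt : Φ * Φᵀ = 1 := mul_eq_one_comm.mp hΦ
  -- Φᵀ preserves sums of squares
  have hpres : ∀ y : (Fin n ⊕ Fin m) → ℝ,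
      ∑ i, (Φᵀ.mulVec y i)^2 = ∑ i, (y i)^2 := by
    intro y
    have h1 : ∑ i, (Φᵀ.mulVec y i)^2 = (Φᵀ.mulVec y) ⬝ᵥ (Φᵀ.mulVec y) := by
      simp [dotProduct, sq]
    have h2 : ∑ i, (y i)^2 = y ⬝ᵥ y := by simp [dotProduct, sq]
    rw [h1, h2, dotProduct_mulVec, vecMul_transpose, mulVec_mulVec, hΦΦt, one_mulVec]
  have pinl : ∀ t i, ps t (Sum.inl i) = b i := by
    intro t i
    cases t with
    | zero => rw [hp0]; rfl
    | succ t => rw [hp t]; rfl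
  -- the four per-step facts
  have key : ∀ t, (∀ i, |Φᵀ.mulVec (yhat (t+1)) i| ≤ 1) ∧
      (∀ i, ys (t+1) (Sum.inl i) = yhat (t+1) (Sum.inl i)) ∧
      (∀ j, ys (t+1) (Sum.inr j) = 0) ∧
      l2norm (ys (t+1)) ≤ l2norm (yhat (t+1)) := by
    intro t
    have hμne : μ t ≠ 0 := (hμ t).ne'
    have hinf : ∀ i, |Φᵀ.mulVec (yhat (t+1)) i| ≤ 1 := by
      intro i
      set w := Φᵀ.mulVec (ps t + (μ t)⁻¹ • ys t) with hw
      have hval : Φᵀ.mulVec (yhat (t+1)) i = μ t * (w i - xs (t+1) i) := by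
        rw [hyhat t, hw]
        simp only [mulVec_add, mulVec_smul, mulVec_sub, mulVec_mulVec, hΦ, one_mulVec,
          Pi.add_apply, Pi.smul_apply, Pi.sub_apply, smul_eq_mul]
        field_simp
        ring
      have hxi : xs (t+1) i = softThresh (μ t)⁻¹ (w i) := by rw [hx t]; rfl
      rw [hval, hxi, abs_mul, abs_of_pos (hμ t)]
      calc μ t * |w i - softThresh (μ t)⁻¹ (w i)|
          ≤ μ t * (μ t)⁻¹ :=
            mul_le_mul_of_nonneg_left
              (softThresh_dist (μ t)⁻¹ (w i) (inv_nonneg.mpr (hμ t).le)) (hμ t).le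
        _ = 1 := mul_inv_cancel₀ hμne
    have hinr : ∀ j, ys (t+1) (Sum.inr j) = 0 := by
      intro j
      rw [hy t, hp t]
      simp only [Pi.add_apply, Pi.smul_apply, Pi.sub_apply, Sum.elim_inr, smul_eq_mul]
      field_simp
      ring
    have hinl : ∀ i, ys (t+1) (Sum.inl i) = yhat (t+1) (Sum.inl i) := by
      intro i
      rw [hy t, hyhat t]
      simp only [Pi.add_apply, Pi.smul_apply, Pi.sub_apply, smul_eq_mul,
        pinl (t+1) i, pinl t i]
    refine ⟨hinf, hinl, hinr, ?_⟩
    have hle : ∑ i, (ys (t+1) i)^2 ≤ ∑ i, (yhat (t+1) i)^2 := by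
      rw [Fintype.sum_sum_type, Fintype.sum_sum_type]
      refine add_le_add (le_of_eq (Finset.sum_congr rfl fun i _ => by rw [hinl i]))
        (Finset.sum_le_sum fun j _ => by rw [hinr j]; simpa using sq_nonneg _)
    exact Real.sqrt_le_sqrt hle
  refine ⟨key, ?_⟩
  refine ⟨Real.sqrt (Fintype.card (Fin n ⊕ Fin m)), ?_⟩
  have hyhatb : ∀ t, l2norm (yhat (t+1)) ≤ Real.sqrt (Fintype.card (Fin n ⊕ Fin m)) := by
    intro t
    unfold l2norm
    apply Real.sqrt_le_sqrt
    rw [← hpres (yhat (t+1))]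
    calc ∑ i, (Φᵀ.mulVec (yhat (t+1)) i)^2
        ≤ ∑ _i : Fin n ⊕ Fin m, (1:ℝ) := by
          apply Finset.sum_le_sum
          intro i _
          have h := (key t).1 i
          calc (Φᵀ.mulVec (yhat (t+1)) i)^2 = |Φᵀ.mulVec (yhat (t+1)) i|^2 := (sq_abs _).symm
            _ ≤ 1^2 := pow_le_pow_left₀ (abs_nonneg _) h 2
            _ = 1 := one_pow 2
      _ = (Fintype.card (Fin n ⊕ Fin m) : ℝ) := by simp
  intro t
  cases t with
  | zero =>
      rw [hy0, hyhat0]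
      have : l2norm (0 : (Fin n ⊕ Fin m) → ℝ) = 0 := by
        unfold l2norm; simp
      rw [this]
      exact ⟨Real.sqrt_nonneg _, Real.sqrt_nonneg _⟩
  | succ t =>
      exact ⟨le_trans (key t).2.2.2 (hyhatb t), hyhatb t⟩
end

section
/- In Algorithm 2, if there exists C > 0 with ‖p_{t+1} − p_t‖₂ ≤ C/μ_t for all t and ∑_{t=1}^∞ 1/μ_t < ∞, then {p_t} is a Cauchy sequence and hence converges to some p^f; moreover the iterates x_t converge to x^f with Φx^f = p^f, so (x^f, p^f) is a feasible solution of Φx = p, Γ(p) = b. -/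
open Matrix

lemma abs_softThresh_sub_le (l w : ℝ) (hl : 0 ≤ l) : |softThresh l w - w| ≤ l := by
  unfold softThresh
  rcases lt_trichotomy w 0 with hw | hw | hw
  · rw [Real.sign_of_neg hw, abs_of_neg hw]
    rcases le_total (-w) l with h | h
    · rw [max_eq_right (by linarith)]
      rw [abs_of_nonneg (by linarith)]; linarith
    · rw [max_eq_left (by linarith)]
      rw [show -1 * (-w - l) - w = l by ring, abs_of_nonneg hl]
  · simp [hw, hl]
  · rw [Real.sign_of_pos hw, abs_of_pos hw]
    rcases le_total w l with h | h
    · rw [max_eq_right (by linarith)]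
      rw [abs_of_nonpos (by linarith)]; linarith
    · rw [max_eq_left (by linarith)]
      rw [show 1 * (w - l) - w = -l by ring, abs_neg, abs_of_nonneg hl]

lemma abs_le_l2norm {ι : Type*} [Fintype ι] (x : ι → ℝ) (i : ι) : |x i| ≤ l2norm x := by
  have h : (x i)^2 ≤ ∑ j, (x j)^2 :=
    Finset.single_le_sum (f := fun j => (x j)^2) (fun j _ => sq_nonneg _) (Finset.mem_univ i)
  calc |x i| = Real.sqrt ((x i)^2) := (Real.sqrt_sq_eq_abs _).symm
    _ ≤ _ := Real.sqrt_le_sqrt h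

/-- In Algorithm 2, if `‖p_{t+1} - p_t‖₂ ≤ C/μ_t` and `∑ 1/μ_t < ∞`, then `{p_t}` is
Cauchy hence converges to some `p^f`, `{x_t}` converges to some `x^f` with `Φx^f = p^f`,
and `(x^f, p^f)` is feasible: `Γ(p^f) = b`. -/
theorem alg2_feasible_limit {n m : ℕ}
    (Φ : Matrix (Fin n ⊕ Fin m) (Fin n ⊕ Fin m) ℝ) (hΦ : Φᵀ * Φ = 1)
    (b : Fin n → ℝ) (μ : ℕ → ℝ) (hμ : ∀ t, 0 < μ t)
    (xs ps ys : ℕ → (Fin n ⊕ Fin m) → ℝ)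
    (hx0 : xs 0 = 0) (hp0 : ps 0 = Sum.elim b 0) (hy0 : ys 0 = 0)
    (hx : ∀ t, xs (t+1) = softThreshV (μ t)⁻¹ (Φᵀ.mulVec (ps t + (μ t)⁻¹ • ys t)))
    (hp : ∀ t, ps (t+1) =
      Sum.elim b (fun j => (Φ.mulVec (xs (t+1)) - (μ t)⁻¹ • ys t) (Sum.inr j)))
    (hy : ∀ t, ys (t+1) = ys t + μ t • (ps (t+1) - Φ.mulVec (xs (t+1))))
    (C : ℝ) (hC : 0 < C) (hdiff : ∀ t, l2norm (ps (t+1) - ps t) ≤ C / μ t)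
    (hsum : Summable (fun t => (μ t)⁻¹)) :
    CauchySeq ps ∧
    ∃ (xf pf : (Fin n ⊕ Fin m) → ℝ),
      Filter.Tendsto ps Filter.atTop (nhds pf) ∧
      Filter.Tendsto xs Filter.atTop (nhds xf) ∧
      Φ.mulVec xf = pf ∧ (∀ i, pf (Sum.inl i) = b i) := by
  classical
  -- Step 1: Cauchy sequence
  have hd : ∀ t, dist (ps t) (ps (t+1)) ≤ C * (μ t)⁻¹ := by
    intro t
    have hμt := hμ t
    have hCμ : 0 ≤ C * (μ t)⁻¹ := by positivity
    rw [dist_pi_le_iff hCμ]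
    intro i
    rw [Real.dist_eq, abs_sub_comm]
    calc |ps (t+1) i - ps t i| = |(ps (t+1) - ps t) i| := by simp
      _ ≤ l2norm (ps (t+1) - ps t) := abs_le_l2norm _ i
      _ ≤ C / μ t := hdiff t
      _ = C * (μ t)⁻¹ := div_eq_mul_inv _ _
  have hcauchy : CauchySeq ps :=
    cauchySeq_of_dist_le_of_summable _ hd (hsum.mul_left C)
  obtain ⟨pf, hpf⟩ := cauchySeq_tendsto_of_complete hcauchy
  -- auxiliary quantities
  have hPhiPhiT : Φ * Φᵀ = 1 := mul_eq_one_comm.mp hΦ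
  set A : ℝ := ∑ i, ∑ j, |Φ i j| with hA
  have hA0 : 0 ≤ A := Finset.sum_nonneg fun i _ => Finset.sum_nonneg fun j _ => abs_nonneg _
  set e : ℕ → (Fin n ⊕ Fin m) → ℝ :=
    fun t => xs (t+1) - Φᵀ.mulVec (ps t + (μ t)⁻¹ • ys t) with he_def
  have he : ∀ t j, |e t j| ≤ (μ t)⁻¹ := by
    intro t j
    have hμt := hμ t
    have h := abs_softThresh_sub_le (μ t)⁻¹ (Φᵀ.mulVec (ps t + (μ t)⁻¹ • ys t) j)
      (by positivity)
    simpa [he_def, hx t, softThreshV] using h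
  have hmulVec_bound : ∀ t i, |Φ.mulVec (e t) i| ≤ A * (μ t)⁻¹ := by
    intro t i
    have hμt := hμ t
    calc |Φ.mulVec (e t) i| = |∑ j, Φ i j * e t j| := by
          simp [Matrix.mulVec, dotProduct]
      _ ≤ ∑ j, |Φ i j * e t j| := Finset.abs_sum_le_sum_abs _ _
      _ ≤ ∑ j, |Φ i j| * (μ t)⁻¹ := by
          refine Finset.sum_le_sum fun j _ => ?_
          rw [abs_mul]
          exact mul_le_mul_of_nonneg_left (he t j) (abs_nonneg _)
      _ = (∑ j, |Φ i j|) * (μ t)⁻¹ := by rw [Finset.sum_mul]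
      _ ≤ A * (μ t)⁻¹ := by
          refine mul_le_mul_of_nonneg_right ?_ (by positivity)
          exact Finset.single_le_sum (f := fun i => ∑ j, |Φ i j|)
            (fun i _ => Finset.sum_nonneg fun j _ => abs_nonneg _) (Finset.mem_univ i)
  have hxs1 : ∀ t, Φ.mulVec (xs (t+1)) = ps t + (μ t)⁻¹ • ys t + Φ.mulVec (e t) := by
    intro t
    have hx' : xs (t+1) = Φᵀ.mulVec (ps t + (μ t)⁻¹ • ys t) + e t := by
      simp [he_def]
    rw [hx', Matrix.mulVec_add, Matrix.mulVec_mulVec, hPhiPhiT, Matrix.one_mulVec]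
  have hys : ∀ t, ys (t+1) = μ t • (ps (t+1) - ps t - Φ.mulVec (e t)) := by
    intro t
    have hμt : (μ t) ≠ 0 := (hμ t).ne'
    rw [hy t, hxs1 t]
    funext i
    simp only [Pi.add_apply, Pi.sub_apply, Pi.smul_apply, smul_eq_mul]
    field_simp
    ring
  set D : ℝ := C + A with hD
  have hbound : ∀ t i, |ys t i| ≤ D := by
    intro t i
    cases t with
    | zero =>
      rw [hy0]
      simp only [Pi.zero_apply, abs_zero]
      positivity
    | succ s =>
      have hμs := hμ s
      rw [hys s]
      simp only [Pi.smul_apply, Pi.sub_apply, smul_eq_mul, abs_mul, abs_of_pos hμs]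
      have h1 : |ps (s+1) i - ps s i| ≤ C / μ s := by
        calc |ps (s+1) i - ps s i| = |(ps (s+1) - ps s) i| := by simp
          _ ≤ l2norm (ps (s+1) - ps s) := abs_le_l2norm _ i
          _ ≤ C / μ s := hdiff s
      have h2 := hmulVec_bound s i
      calc μ s * |ps (s+1) i - ps s i - Φ.mulVec (e s) i|
          ≤ μ s * (|ps (s+1) i - ps s i| + |Φ.mulVec (e s) i|) := by
            refine mul_le_mul_of_nonneg_left ?_ hμs.le
            exact abs_sub _ _
        _ ≤ μ s * (C / μ s + A * (μ s)⁻¹) :=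
            mul_le_mul_of_nonneg_left (add_le_add h1 h2) hμs.le
        _ = D := by field_simp; exact hD.symm
  -- limits
  have hμ0 : Filter.Tendsto (fun t => (μ t)⁻¹) Filter.atTop (nhds 0) :=
    hsum.tendsto_atTop_zero
  have hps : ∀ i, Filter.Tendsto (fun t => ps t i) Filter.atTop (nhds (pf i)) :=
    fun i => tendsto_pi_nhds.mp hpf i
  have hys0 : ∀ i, Filter.Tendsto (fun t => (μ t)⁻¹ * ys t i) Filter.atTop (nhds 0) := by
    intro i
    refine squeeze_zero_norm (fun t => ?_) (by simpa using hμ0.mul_const D)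
    have hμt := hμ t
    rw [Real.norm_eq_abs, abs_mul, abs_of_nonneg (by positivity : (0:ℝ) ≤ (μ t)⁻¹)]
    exact mul_le_mul_of_nonneg_left (hbound t i) (by positivity)
  have hw : ∀ j, Filter.Tendsto (fun t => ps t j + (μ t)⁻¹ * ys t j)
      Filter.atTop (nhds (pf j)) := by
    intro j
    simpa using (hps j).add (hys0 j)
  have hg : ∀ i, Filter.Tendsto (fun t => Φᵀ.mulVec (ps t + (μ t)⁻¹ • ys t) i)
      Filter.atTop (nhds (Φᵀ.mulVec pf i)) := by
    intro i
    have hform : ∀ t, Φᵀ.mulVec (ps t + (μ t)⁻¹ • ys t) i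
        = ∑ j, Φᵀ i j * (ps t j + (μ t)⁻¹ * ys t j) := by
      intro t; simp [Matrix.mulVec, dotProduct]
    have h2 : Φᵀ.mulVec pf i = ∑ j, Φᵀ i j * pf j := by
      simp [Matrix.mulVec, dotProduct]
    simp only [hform]
    rw [h2]
    exact tendsto_finset_sum _ fun j _ => (hw j).const_mul _
  have hxcoord : ∀ i, Filter.Tendsto (fun t => xs (t+1) i) Filter.atTop
      (nhds (Φᵀ.mulVec pf i)) := by
    intro i
    have herr : Filter.Tendsto (fun t => e t i) Filter.atTop (nhds 0) := by
      refine squeeze_zero_norm (fun t => ?_) hμ0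
      rw [Real.norm_eq_abs]; exact he t i
    have h := (hg i).add herr
    rw [add_zero] at h
    refine h.congr fun t => ?_
    simp [he_def]
  have hxs_t : Filter.Tendsto xs Filter.atTop (nhds (Φᵀ.mulVec pf)) := by
    rw [tendsto_pi_nhds]
    intro i
    exact (Filter.tendsto_add_atTop_iff_nat 1).mp (hxcoord i)
  have hfeas : Φ.mulVec (Φᵀ.mulVec pf) = pf := by
    rw [Matrix.mulVec_mulVec, hPhiPhiT, Matrix.one_mulVec]
  have hpfb : ∀ i, pf (Sum.inl i) = b i := by
    intro i
    have h1 : Filter.Tendsto (fun t => ps t (Sum.inl i)) Filter.atTop (nhds (b i)) := by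
      refine Filter.Tendsto.congr' ?_ tendsto_const_nhds
      filter_upwards [Filter.eventually_ge_atTop 1] with t ht
      obtain ⟨s, rfl⟩ := Nat.exists_eq_add_of_le ht
      rw [show 1 + s = s + 1 by ring, hp s]
      simp
    exact tendsto_nhds_unique (hps (Sum.inl i)) h1
  exact ⟨hcauchy, Φᵀ.mulVec pf, pf, hpf, hxs_t, hfeas, hpfb⟩
end

section
/- The relaxed ONE-L1 iteration with Φ orthonormal, using Γ̄(y_t) = 0 and Φ'Φ = A'A + B'B = I, is equivalent to the IST-type recursion x_{t+1} = S_{λ_t}(x_t + A'z_t), z_t = b − A[(1+κ_t)x_t − κ_t x_{t−1}] + κ_t z_{t−1}, where λ_t = 1/μ_t and κ_t = μ_{t−1}/μ_t, starting from x_t = 0 for t ≤ 0 and z_t = 0 for t < 0. -/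
open Matrix

/-- The relaxed ONE-L1 iteration is equivalent to the IST-type recursion
`x_{t+1} = S_{λ_t}(x_t + Aᵀz_t)`,
`z_t = b - A[(1+κ_t)x_t - κ_t x_{t-1}] + κ_t z_{t-1}`,
with `λ_t = 1/μ_t`, `κ_t = μ_{t-1}/μ_t` and zero initial conditions (so `z_0 = b`). -/
theorem rONE_L1_eq_modified_IST {n m : ℕ}
    (Φ : Matrix (Fin n ⊕ Fin m) (Fin n ⊕ Fin m) ℝ) (hΦ : Φᵀ * Φ = 1)
    (A : Matrix (Fin n) (Fin n ⊕ Fin m) ℝ) (hA : A = Φ.submatrix Sum.inl id)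
    (b : Fin n → ℝ) (μ : ℕ → ℝ) (hμ : ∀ t, 0 < μ t)
    (xs ps ys : ℕ → (Fin n ⊕ Fin m) → ℝ)
    (hx0 : xs 0 = 0) (hp0 : ps 0 = Sum.elim b 0) (hy0 : ys 0 = 0)
    (hx : ∀ t, xs (t+1) = softThreshV (μ t)⁻¹ (Φᵀ.mulVec (ps t + (μ t)⁻¹ • ys t)))
    (hp : ∀ t, ps (t+1) =
      Sum.elim b (fun j => (Φ.mulVec (xs (t+1)) - (μ t)⁻¹ • ys t) (Sum.inr j)))
    (hy : ∀ t, ys (t+1) = ys t + μ t • (ps (t+1) - Φ.mulVec (xs (t+1))))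
    (z : ℕ → Fin n → ℝ) (hz0 : z 0 = b)
    (hz : ∀ t, z (t+1) =
      b - A.mulVec ((1 + μ t / μ (t+1)) • xs (t+1) - (μ t / μ (t+1)) • xs t)
        + (μ t / μ (t+1)) • z t) :
    ∀ t, xs (t+1) = softThreshV (μ t)⁻¹ (xs t + Aᵀ.mulVec (z t)) := by
  subst hA
  set A := Φ.submatrix Sum.inl (id : (Fin n ⊕ Fin m) → (Fin n ⊕ Fin m)) with hA
  set B := Φ.submatrix Sum.inr (id : (Fin n ⊕ Fin m) → (Fin n ⊕ Fin m)) with hB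
  have hsplit : ∀ v : (Fin n ⊕ Fin m) → ℝ,
      Φᵀ.mulVec v = Aᵀ.mulVec (fun i => v (Sum.inl i)) + Bᵀ.mulVec (fun j => v (Sum.inr j)) := by
    intro v; funext k
    simp [Matrix.mulVec, dotProduct, Fintype.sum_sum_type, hA, hB,
      Matrix.transpose_apply, Matrix.submatrix_apply, Pi.add_apply]
  have hAmul : ∀ x : (Fin n ⊕ Fin m) → ℝ,
      A.mulVec x = fun i => Φ.mulVec x (Sum.inl i) := fun x => rfl
  have hBmul : ∀ x : (Fin n ⊕ Fin m) → ℝ,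
      B.mulVec x = fun j => Φ.mulVec x (Sum.inr j) := fun x => rfl
  have hrec : ∀ x : (Fin n ⊕ Fin m) → ℝ,
      Aᵀ.mulVec (A.mulVec x) + Bᵀ.mulVec (B.mulVec x) = x := by
    intro x
    rw [hAmul, hBmul, ← hsplit, Matrix.mulVec_mulVec, hΦ, Matrix.one_mulVec]
  -- inr components of ys vanish
  have hyr : ∀ t j, ys t (Sum.inr j) = 0 := by
    intro t
    induction t with
    | zero => intro j; simp [hy0]
    | succ t ih =>
      intro j
      rw [hy t, hp t]
      simp [ih j, (hμ t).ne']
  -- invariant for z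
  have hzinv : ∀ t, z t = b - A.mulVec (xs t) + (μ t)⁻¹ • (fun i => ys t (Sum.inl i)) := by
    intro t
    induction t with
    | zero =>
      rw [hz0, hx0, hy0]
      funext i
      simp
    | succ t ih =>
      have hyl : (fun i => ys (t+1) (Sum.inl i))
          = (fun i => ys t (Sum.inl i)) + μ t • (b - A.mulVec (xs (t+1))) := by
        funext i
        rw [hy t, hp t]
        simp [hAmul, mul_sub]
      rw [hz t, ih, hyl]
      funext i
      have h0 : μ t ≠ 0 := (hμ t).ne'
      have h1 : μ (t+1) ≠ 0 := (hμ (t+1)).ne'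
      simp only [Pi.add_apply, Pi.sub_apply, Pi.smul_apply, smul_eq_mul,
        Matrix.mulVec_sub, Matrix.mulVec_smul]
      field_simp
      ring
  -- main
  intro t
  rw [hx t]
  have harg : Φᵀ.mulVec (ps t + (μ t)⁻¹ • ys t) = xs t + Aᵀ.mulVec (z t) := by
    cases t with
    | zero =>
      rw [hp0, hy0, hx0, hz0, hsplit]
      have h1 : (fun i => (Sum.elim b (0 : Fin m → ℝ)
          + (μ 0)⁻¹ • (0 : (Fin n ⊕ Fin m) → ℝ)) (Sum.inl i)) = b := by
        funext i; simp
      have h2 : (fun j => (Sum.elim b (0 : Fin m → ℝ)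
          + (μ 0)⁻¹ • (0 : (Fin n ⊕ Fin m) → ℝ)) (Sum.inr j)) = 0 := by
        funext j; simp
      rw [h1, h2, Matrix.mulVec_zero]
      simp
    | succ s =>
      have hvl : (fun i => (ps (s+1) + (μ (s+1))⁻¹ • ys (s+1)) (Sum.inl i))
          = b + (μ (s+1))⁻¹ • (fun i => ys (s+1) (Sum.inl i)) := by
        funext i
        rw [hp s]
        simp
      have hvr : (fun j => (ps (s+1) + (μ (s+1))⁻¹ • ys (s+1)) (Sum.inr j))
          = B.mulVec (xs (s+1)) := by
        funext j
        rw [hp s, hBmul]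
        simp [hyr s j, hyr (s+1) j]
      rw [hsplit, hvl, hvr, hzinv (s+1)]
      have hBB : Bᵀ.mulVec (B.mulVec (xs (s+1)))
          = xs (s+1) - Aᵀ.mulVec (A.mulVec (xs (s+1))) :=
        eq_sub_of_add_eq' (hrec (xs (s+1)))
      rw [hBB]
      simp only [Matrix.mulVec_add, Matrix.mulVec_sub, Matrix.mulVec_smul]
      abel
  rw [harg]
end
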